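/- Let Γ_1, Γ_2, ... be events generating σ-algebras F_{m,n}, with φ-mixing coefficient φ(k) summable. Let q : ℕ → ℕ be such that for each integer k the equation q(n) = k has at most K solutions n. If ∑_{n=1}^N P(Γ_{q(n)}) → ∞ as N → ∞, then almost surely (∑_{n=1}^N 1_{Γ_{q(n)}}) / (∑_{n=1}^N P(Γ_{q(n)})) → 1. -/

import Mathlib

/-!
Write `S_N = ∑_{n ≤ N} 1_{Γ_{q(n)}}`. The mixing inequality gives
`cov(1_{Γ_a}, 1_{Γ_b}) ≤ φ(b - a) P(Γ_a)` for `1 ≤ a ≤ b`; since each value of `q` is taken at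
most `K` times, summing over pairs yields `Var S_N ≤ 2K (1 + ∑ φ) E S_N`.
Along the indices `N_j` where `E S_N` first exceeds `(j + 1)²`, the second moments
`E[(S_{N_j} / E S_{N_j} - 1)²] = Var S_{N_j} / (E S_{N_j})²` are `O(j⁻²)`, hence summable, so
`S_{N_j} / E S_{N_j} → 1` almost surely. Because `S_N` is nondecreasing and
`E S_{N_{j+1}} / E S_{N_j} → 1`, the whole sequence follows.
-/

open MeasureTheory Filter ProbabilityTheory Topology Finset

theorem sum_comp_le_mul_sum_image {ι κ : Type*} [DecidableEq κ] {s : Finset ι} {q : ι → κ}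
    {g : κ → ℝ} {K : ℕ} (hg : ∀ b, 0 ≤ g b) (hK : ∀ b, #{a ∈ s | q a = b} ≤ K) :
    ∑ a ∈ s, g (q a) ≤ K * ∑ b ∈ s.image q, g b := by
  rw [sum_comp, mul_sum]
  gcongr with b
  rw [nsmul_eq_mul]
  exact mul_le_mul_of_nonneg_right (mod_cast hK b) (hg b)

theorem sum_sum_le_two_mul_sum_sum_of_le {ι α : Type*} [LinearOrder α] (s : Finset ι)
    (f : ι → α) {c B : ι → ι → ℝ} (hc : ∀ i j, c i j = c j i) (hB : ∀ i j, 0 ≤ B i j)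
    (hcB : ∀ i j, f i ≤ f j → c i j ≤ B i j) :
    ∑ i ∈ s, ∑ j ∈ s, c i j ≤ 2 * ∑ i ∈ s, ∑ j ∈ s, if f i ≤ f j then B i j else 0 := by
  set b : ι → ι → ℝ := fun i j => if f i ≤ f j then B i j else 0
  have hb : ∀ i j, 0 ≤ b i j := fun i j => by by_cases h : f i ≤ f j <;> simp [b, h, hB]
  have hcb : ∀ i j, c i j ≤ b i j + b j i := by
    intro i j
    rcases le_total (f i) (f j) with h | h
    · simpa [b, h] using (hcB i j h).trans (le_add_of_nonneg_right (hb j i))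
    · simpa [b, h, hc i j] using (hcB j i h).trans (le_add_of_nonneg_left (hb i j))
  calc ∑ i ∈ s, ∑ j ∈ s, c i j ≤ ∑ i ∈ s, ∑ j ∈ s, (b i j + b j i) := by gcongr; exact hcb _ _
    _ = 2 * ∑ i ∈ s, ∑ j ∈ s, b i j := by
      simp only [sum_add_distrib]
      rw [sum_comm (f := fun i j => b j i)]
      ring

theorem sum_ite_sub_comp_le_mul_tsum {ι : Type*} {φ : ℕ → ℝ} (hφ0 : ∀ k, 0 ≤ φ k)
    (hφ : Summable φ) {s : Finset ι} {q : ι → ℕ} {K : ℕ} (hK : ∀ k, #{n ∈ s | q n = k} ≤ K)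
    (a : ℕ) : ∑ m ∈ s, (if a ≤ q m then φ (q m - a) else 0) ≤ K * ∑' k, φ k := by
  refine (sum_comp_le_mul_sum_image (g := fun b => if a ≤ b then φ (b - a) else 0)
    (fun b => by split_ifs <;> simp [hφ0]) hK).trans ?_
  gcongr
  rw [← sum_filter, ← sum_image (f := φ) (g := (· - a)) ?inj]
  · exact hφ.sum_le_tsum _ fun k _ => hφ0 k
  intro x hx y hy hxy
  simp only [coe_filter, Set.mem_ofPred_eq] at hx hy
  simp only at hxy
  omega

theorem tendsto_add_two_sq_add_one_div_add_one_sq :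
    Tendsto (fun j : ℕ => (((j : ℝ) + 2) ^ 2 + 1) / ((j : ℝ) + 1) ^ 2) atTop (𝓝 1) := by
  have h0 : Tendsto (fun j : ℕ => 1 / ((j : ℝ) + 1)) atTop (𝓝 0) :=
    tendsto_one_div_add_atTop_nhds_zero_nat
  have h := (tendsto_const_nhds (x := (1 : ℝ))).add ((h0.const_mul 2).add ((h0.pow 2).const_mul 2))
  norm_num at h
  refine h.congr fun j => ?_
  field_simp
  ring

theorem exists_subseq_sq_le_of_le_add_one {A : ℕ → ℝ} (hA : Monotone A)
    (hstep : ∀ N, A (N + 1) ≤ A N + 1) (hdiv : Tendsto A atTop atTop) :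
    ∃ T : ℕ → ℕ, Monotone T ∧ Tendsto T atTop atTop ∧ (∀ j : ℕ, ((j : ℝ) + 1) ^ 2 ≤ A (T j)) ∧
      Tendsto (fun j => A (T (j + 1)) / A (T j)) atTop (𝓝 1) := by
  have hex : ∀ j : ℕ, ∃ N, ((j : ℝ) + 1) ^ 2 ≤ A N := fun j => (hdiv.eventually_ge_atTop _).exists
  classical
  set T : ℕ → ℕ := fun j => Nat.find (hex j)
  have hT : ∀ j : ℕ, ((j : ℝ) + 1) ^ 2 ≤ A (T j) := fun j => Nat.find_spec (hex j)
  have hTmono : Monotone T := monotone_nat_of_le_succ fun j =>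
    Nat.find_mono fun N hN => le_trans (by push_cast; nlinarith [Nat.cast_nonneg (α := ℝ) j]) hN
  have hTtop : Tendsto T atTop atTop := by
    refine tendsto_atTop_atTop.2 fun M => ?_
    obtain ⟨j₀, hj₀⟩ := exists_nat_gt (A M)
    refine ⟨j₀, fun j hj => le_of_lt (hA.reflect_lt ?_)⟩
    calc A M < j₀ := hj₀
      _ ≤ ((j : ℝ) + 1) ^ 2 := by
        have : (j₀ : ℝ) ≤ j := mod_cast hj
        nlinarith
      _ ≤ A (T j) := hT j
  have hTle : ∀ᶠ j in atTop, A (T j) ≤ ((j : ℝ) + 1) ^ 2 + 1 := by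
    filter_upwards [hTtop.eventually_gt_atTop 0] with j hj
    obtain ⟨M, hM⟩ := Nat.exists_eq_add_one_of_ne_zero hj.ne'
    have hmin : A M < ((j : ℝ) + 1) ^ 2 := not_le.1 (Nat.find_min (hex j) (by omega : M < T j))
    have := hstep M
    rw [← hM] at this
    linarith
  refine ⟨T, hTmono, hTtop, hT, ?_⟩
  have hpos : ∀ j, 0 < A (T j) := fun j => lt_of_lt_of_le (by positivity) (hT j)
  refine tendsto_of_tendsto_of_tendsto_of_le_of_le' tendsto_const_nhds
    tendsto_add_two_sq_add_one_div_add_one_sq ?_ ?_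
  · exact Eventually.of_forall fun j => (one_le_div (hpos j)).2 (hA (hTmono j.le_succ))
  · filter_upwards [(tendsto_add_atTop_nat 1).eventually hTle] with j hj
    push_cast at hj
    exact div_le_div₀ (by positivity) (by linarith) (by positivity) (hT j)

theorem exists_index_bracket {T : ℕ → ℕ} (hT : Monotone T) (hTtop : Tendsto T atTop atTop) :
    ∃ J : ℕ → ℕ, Tendsto J atTop atTop ∧ ∀ᶠ N in atTop, T (J N) ≤ N ∧ N < T (J N + 1) := by
  have hex : ∀ N, ∃ j, N < T (j + 1) := fun N =>
    ((tendsto_add_atTop_iff_nat 1).2 hTtop |>.eventually_gt_atTop N).exists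
  refine ⟨fun N => Nat.find (hex N), ?_, ?_⟩
  · refine tendsto_atTop_atTop.2 fun M => ⟨T M, fun N hN => (Nat.le_find_iff _ _).2 ?_⟩
    intro m hm
    exact not_lt.2 ((hT (by omega : m + 1 ≤ M)).trans hN)
  · filter_upwards [eventually_ge_atTop (T 0)] with N hN
    refine ⟨?_, Nat.find_spec (hex N)⟩
    rcases h : Nat.find (hex N) with _ | i
    · exact hN
    · exact not_lt.1 (Nat.find_min (hex N) (by omega : i < Nat.find (hex N)))

theorem tendsto_div_of_tendsto_div_comp {s a : ℕ → ℝ} {T : ℕ → ℕ} (hs0 : ∀ N, 0 ≤ s N)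
    (hs : Monotone s) (ha : Monotone a) (hT : Monotone T) (hTtop : Tendsto T atTop atTop)
    (hpos : ∀ j, 0 < a (T j)) (hratio : Tendsto (fun j => a (T (j + 1)) / a (T j)) atTop (𝓝 1))
    (hconv : Tendsto (fun j => s (T j) / a (T j)) atTop (𝓝 1)) :
    Tendsto (fun N => s N / a N) atTop (𝓝 1) := by
  obtain ⟨J, hJtop, hJ⟩ := exists_index_bracket hT hTtop
  have hlower : Tendsto (fun j => s (T j) / a (T (j + 1))) atTop (𝓝 1) := by
    have := hconv.div hratio one_ne_zero
    rw [div_one] at this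
    refine this.congr fun j => ?_
    simp only [Pi.div_apply]
    field_simp [(hpos j).ne', (hpos (j + 1)).ne']
  have hupper : Tendsto (fun j => s (T (j + 1)) / a (T j)) atTop (𝓝 1) := by
    have := (hconv.comp (tendsto_add_atTop_nat 1)).mul hratio
    rw [one_mul] at this
    refine this.congr fun j => ?_
    simp only [Function.comp_apply]
    field_simp [(hpos j).ne', (hpos (j + 1)).ne']
  refine tendsto_of_tendsto_of_tendsto_of_le_of_le' (hlower.comp hJtop) (hupper.comp hJtop) ?_ ?_
  · filter_upwards [hJ] with N ⟨hle, hlt⟩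
    exact div_le_div₀ (hs0 N) (hs hle) ((hpos _).trans_le (ha hle)) (ha hlt.le)
  · filter_upwards [hJ] with N ⟨hle, hlt⟩
    exact div_le_div₀ (hs0 _) (hs hlt.le) (hpos _) (ha hle)

theorem ae_tendsto_zero_of_summable_integral {Ω : Type*} [MeasurableSpace Ω] {μ : Measure Ω}
    {Z : ℕ → Ω → ℝ} (hZ0 : ∀ j, 0 ≤ᵐ[μ] Z j) (hZ : ∀ j, Integrable (Z j) μ)
    (hsum : Summable fun j => ∫ ω, Z j ω ∂μ) :
    ∀ᵐ ω ∂μ, Tendsto (fun j => Z j ω) atTop (𝓝 0) := by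
  have hmeas : ∀ j, AEMeasurable (fun ω => ENNReal.ofReal (Z j ω)) μ :=
    fun j => (hZ j).aemeasurable.ennreal_ofReal
  have hfin : ∫⁻ ω, ∑' j, ENNReal.ofReal (Z j ω) ∂μ ≠ ⊤ := by
    rw [lintegral_tsum hmeas]
    simp_rw [← ofReal_integral_eq_lintegral_ofReal (hZ _) (hZ0 _)]
    rw [← ENNReal.ofReal_tsum_of_nonneg (fun j => integral_nonneg_of_ae (hZ0 j)) hsum]
    exact ENNReal.ofReal_ne_top
  filter_upwards [ae_lt_top' (AEMeasurable.tsum hmeas) hfin, ae_all_iff.2 hZ0] with ω hω h0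
  have := (ENNReal.tendsto_toReal ENNReal.zero_ne_top).comp
    (ENNReal.tendsto_atTop_zero_of_tsum_ne_top hω.ne)
  simpa [Function.comp_def, ENNReal.toReal_ofReal (h0 _)] using this

theorem memLp_indicator_one {Ω : Type*} [MeasurableSpace Ω] {μ : Measure Ω} [IsFiniteMeasure μ]
    {A : Set Ω} (hA : MeasurableSet A) (p : ENNReal) : MemLp (A.indicator (1 : Ω → ℝ)) p μ :=
  memLp_indicator_const p hA 1 (Or.inr (measure_ne_top _ _))

section StrongLaw

variable {Ω : Type*} [MeasurableSpace Ω] {μ : Measure Ω} [IsProbabilityMeasure μ]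

theorem ae_tendsto_div_integral_of_variance_le {S : ℕ → Ω → ℝ} {C : ℝ}
    (hS : ∀ N, MemLp (S N) 2 μ) (hS0 : ∀ N ω, 0 ≤ S N ω) (hmono : ∀ ω, Monotone fun N => S N ω)
    (hstep : ∀ N, μ[S (N + 1)] ≤ μ[S N] + 1) (hdiv : Tendsto (fun N => μ[S N]) atTop atTop)
    (hvar : ∀ N, Var[S N; μ] ≤ C * μ[S N]) :
    ∀ᵐ ω ∂μ, Tendsto (fun N => S N ω / μ[S N]) atTop (𝓝 1) := by
  set A : ℕ → ℝ := fun N => μ[S N]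
  have hA : Monotone A := fun N M h =>
    integral_mono ((hS N).integrable one_le_two) ((hS M).integrable one_le_two) fun ω => hmono ω h
  obtain ⟨T, hTmono, hTtop, hT, hratio⟩ := exists_subseq_sq_le_of_le_add_one hA hstep hdiv
  have hpos : ∀ j, 0 < A (T j) := fun j => lt_of_lt_of_le (by positivity) (hT j)
  have hC : 0 ≤ C := nonneg_of_mul_nonneg_left ((variance_nonneg _ _).trans (hvar (T 0))) (hpos 0)
  set Z : ℕ → Ω → ℝ := fun j ω => (S (T j) ω - A (T j)) ^ 2 / A (T j) ^ 2
  have hZint : ∀ j, Integrable (Z j) μ := fun j =>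
    ((hS _).sub (memLp_const (A (T j)))).integrable_sq.div_const _
  have hZle : ∀ j, ∫ ω, Z j ω ∂μ ≤ C / ((j : ℝ) + 1) ^ 2 := by
    intro j
    rw [integral_div, ← variance_eq_integral (hS _).aestronglyMeasurable.aemeasurable]
    calc Var[S (T j); μ] / A (T j) ^ 2 ≤ C * A (T j) / A (T j) ^ 2 := by gcongr; exact hvar _
      _ = C / A (T j) := by field_simp
      _ ≤ C / ((j : ℝ) + 1) ^ 2 := by gcongr; exact hT j
  have hsum : Summable fun j => ∫ ω, Z j ω ∂μ := by
    refine Summable.of_nonneg_of_le (fun j => integral_nonneg fun ω => by positivity) hZle ?_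
    have := ((summable_nat_add_iff 1).2 (Real.summable_one_div_nat_pow.2 one_lt_two)).mul_left C
    refine this.congr fun j => ?_
    push_cast
    ring
  have hconv : ∀ᵐ ω ∂μ, Tendsto (fun j => S (T j) ω / A (T j)) atTop (𝓝 1) := by
    filter_upwards [ae_tendsto_zero_of_summable_integral
      (fun j => ae_of_all _ fun ω => by positivity) hZint hsum] with ω hω
    rw [← tendsto_sub_nhds_zero_iff, tendsto_zero_iff_abs_tendsto_zero]
    have := (Real.continuous_sqrt.tendsto 0).comp hω
    rw [Real.sqrt_zero] at this
    refine this.congr fun j => ?_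
    simp only [Function.comp_apply, Z, ← Real.sqrt_sq_eq_abs]
    congr 1
    field_simp [(hpos j).ne']
  filter_upwards [hconv] with ω hω
  exact tendsto_div_of_tendsto_div_comp (hS0 · ω) (hmono ω) hA hTmono hTtop hpos hratio hω

theorem covariance_indicator_one {A B : Set Ω} (hA : MeasurableSet A) (hB : MeasurableSet B) :
    cov[A.indicator 1, B.indicator 1; μ] = μ.real (A ∩ B) - μ.real A * μ.real B := by
  rw [covariance_eq_sub (memLp_indicator_one hA 2) (memLp_indicator_one hB 2),
    ← Set.inter_indicator_one,
    integral_indicator_one (hA.inter hB), integral_indicator_one hA, integral_indicator_one hB]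

theorem ae_tendsto_sum_indicator_div_of_variance_le {G : ℕ → Set Ω}
    (hG : ∀ n, MeasurableSet (G n)) {C : ℝ}
    (hvar : ∀ N, Var[fun ω => ∑ n ∈ Icc 1 N, (G n).indicator 1 ω; μ] ≤
      C * ∑ n ∈ Icc 1 N, μ.real (G n))
    (hdiv : Tendsto (fun N => ∑ n ∈ Icc 1 N, μ.real (G n)) atTop atTop) :
    ∀ᵐ ω ∂μ, Tendsto (fun N => (∑ n ∈ Icc 1 N, (G n).indicator 1 ω) /
      ∑ n ∈ Icc 1 N, μ.real (G n)) atTop (𝓝 1) := by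
  have hmem : ∀ n, MemLp ((G n).indicator (1 : Ω → ℝ)) 2 μ := fun n => memLp_indicator_one (hG n) 2
  have hint : ∀ N, ∫ ω, ∑ n ∈ Icc 1 N, (G n).indicator (1 : Ω → ℝ) ω ∂μ =
      ∑ n ∈ Icc 1 N, μ.real (G n) := by
    intro N
    rw [integral_finsetSum _ fun n _ => (hmem n).integrable one_le_two]
    exact sum_congr rfl fun n _ => integral_indicator_one (hG n)
  have hind0 : ∀ n ω, 0 ≤ (G n).indicator (1 : Ω → ℝ) ω := fun n =>
    Set.indicator_nonneg fun _ _ => zero_le_one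
  have h := ae_tendsto_div_integral_of_variance_le (μ := μ) (C := C)
    (fun N => memLp_finsetSum _ fun n _ => hmem n)
    (fun N ω => sum_nonneg fun n _ => hind0 n ω)
    (fun ω N M hNM => sum_le_sum_of_subset_of_nonneg (Icc_subset_Icc_right hNM)
      fun n _ _ => hind0 n ω)
    (fun N => by
      rw [hint, hint, sum_Icc_succ_top (by omega)]
      exact add_le_add_right (measureReal_le_one (μ := μ)) _)
    (by simpa only [hint] using hdiv) (fun N => by simpa only [hint] using hvar N)
  simpa only [hint] using h

end StrongLaw

theorem card_filter_eq_le_of_ncard_le {ι κ : Type*} [DecidableEq κ] {q : ι → κ} {K : ℕ}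
    (hq : ∀ k, {n | q n = k}.Finite ∧ {n | q n = k}.ncard ≤ K) (s : Finset ι) (k : κ) :
    #{n ∈ s | q n = k} ≤ K := by
  rw [← Set.ncard_coe_finset]
  refine (Set.ncard_le_ncard (fun n hn => ?_) (hq k).1).trans (hq k).2
  exact (mem_filter.1 (mem_coe.1 hn)).2

def IsPhiMixing {Ω : Type*} [MeasurableSpace Ω] (μ : Measure Ω) (Γ : ℕ → Set Ω)
    (φ : ℕ → ℝ) : Prop :=
  ∀ (m k : ℕ) (A B : Set Ω),
    MeasurableSet[MeasurableSpace.generateFrom {S | ∃ j : ℕ, 1 ≤ j ∧ j ≤ m ∧ S = Γ j}] A →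
    MeasurableSet[MeasurableSpace.generateFrom {S | ∃ j : ℕ, m + k ≤ j ∧ S = Γ j}] B →
    μ A ≠ 0 →
    |(μ (A ∩ B)).toReal / (μ A).toReal - (μ B).toReal| ≤ φ k

namespace IsPhiMixing

variable {Ω : Type*} [MeasurableSpace Ω] {μ : Measure Ω} [IsProbabilityMeasure μ]
  {Γ : ℕ → Set Ω} {φ : ℕ → ℝ}

theorem nonneg (h : IsPhiMixing μ Γ φ) (k : ℕ) : 0 ≤ φ k := by
  simpa using h 0 k Set.univ ∅ (@MeasurableSet.univ _ (MeasurableSpace.generateFrom _))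
    (@MeasurableSet.empty _ (MeasurableSpace.generateFrom _)) (by simp)

theorem measureReal_inter_sub_mul_le (h : IsPhiMixing μ Γ φ) {a b : ℕ} (ha : 1 ≤ a)
    (hab : a ≤ b) :
    μ.real (Γ a ∩ Γ b) - μ.real (Γ a) * μ.real (Γ b) ≤ φ (b - a) * μ.real (Γ a) := by
  rcases eq_or_ne (μ (Γ a)) 0 with h0 | h0
  · have ha0 : μ.real (Γ a) = 0 := by simp [Measure.real, h0]
    have := measureReal_mono (μ := μ) (Set.inter_subset_left (s := Γ a) (t := Γ b))
      (measure_ne_top μ _)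
    rw [ha0] at this ⊢
    simpa using this
  · have hpos : 0 < μ.real (Γ a) := ENNReal.toReal_pos h0 (measure_ne_top _ _)
    have key : μ.real (Γ a ∩ Γ b) / μ.real (Γ a) - μ.real (Γ b) ≤ φ (b - a) :=
      (abs_le.1 (h a (b - a) (Γ a) (Γ b)
        (MeasurableSpace.measurableSet_generateFrom ⟨a, ha, le_rfl, rfl⟩)
        (MeasurableSpace.measurableSet_generateFrom ⟨b, by omega, rfl⟩) h0)).2
    calc _ = (μ.real (Γ a ∩ Γ b) / μ.real (Γ a) - μ.real (Γ b)) * μ.real (Γ a) := by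
          field_simp
      _ ≤ φ (b - a) * μ.real (Γ a) := by gcongr

-- `Γ 0` lies in no `F_{1,m}`, so for `a = 0` only the trivial bound `P(Γ_b)` is available.
theorem measureReal_inter_sub_mul_le_ite (h : IsPhiMixing μ Γ φ) {a b : ℕ} (hab : a ≤ b) :
    μ.real (Γ a ∩ Γ b) - μ.real (Γ a) * μ.real (Γ b) ≤
      if a = 0 then μ.real (Γ b) else φ (b - a) * μ.real (Γ a) := by
  split_ifs with ha
  · have := measureReal_mono (μ := μ) (Set.inter_subset_right (s := Γ a) (t := Γ b))
      (measure_ne_top μ _)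
    nlinarith [measureReal_nonneg (μ := μ) (s := Γ a), measureReal_nonneg (μ := μ) (s := Γ b)]
  · exact h.measureReal_inter_sub_mul_le (Nat.one_le_iff_ne_zero.2 ha) hab

theorem variance_sum_indicator_le (h : IsPhiMixing μ Γ φ) (hΓ : ∀ n, MeasurableSet (Γ n))
    (hφ : Summable φ) {q : ℕ → ℕ} {K : ℕ} {s : Finset ℕ} (hK : ∀ k, #{n ∈ s | q n = k} ≤ K) :
    Var[fun ω => ∑ n ∈ s, (Γ (q n)).indicator 1 ω; μ] ≤
      2 * K * (1 + ∑' k, φ k) * ∑ n ∈ s, μ.real (Γ (q n)) := by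
  set p : ℕ → ℝ := fun n => μ.real (Γ (q n))
  set Φ := ∑' k, φ k
  have hp0 : ∀ n, 0 ≤ p n := fun n => measureReal_nonneg
  have hΦ0 : 0 ≤ Φ := tsum_nonneg h.nonneg
  set B : ℕ → ℕ → ℝ := fun n m => if q n = 0 then p m else φ (q m - q n) * p n
  have hB0 : ∀ n m, 0 ≤ B n m := fun n m => by
    by_cases hn : q n = 0 <;> simp only [B, hn, if_true, if_false]
    exacts [hp0 m, mul_nonneg (h.nonneg _) (hp0 n)]
  have hrow : ∀ n, ∑ m ∈ s, (if q n ≤ q m then B n m else 0) ≤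
      (if q n = 0 then ∑ m ∈ s, p m else 0) + K * Φ * p n := by
    intro n
    by_cases hn : q n = 0
    · simp only [B, hn, zero_le, if_true]
      linarith [mul_nonneg (mul_nonneg (Nat.cast_nonneg K) hΦ0) (hp0 n)]
    · simp only [B, hn, if_false, zero_add]
      calc ∑ m ∈ s, (if q n ≤ q m then φ (q m - q n) * p n else 0)
          = (∑ m ∈ s, if q n ≤ q m then φ (q m - q n) else 0) * p n := by
            rw [sum_mul]
            exact sum_congr rfl fun m _ => by split_ifs <;> simp
        _ ≤ K * Φ * p n :=
            mul_le_mul_of_nonneg_right (sum_ite_sub_comp_le_mul_tsum h.nonneg hφ hK _) (hp0 n)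
  rw [variance_fun_sum' fun n _ => memLp_indicator_one (hΓ (q n)) 2]
  simp_rw [covariance_indicator_one (hΓ _) (hΓ _)]
  calc ∑ n ∈ s, ∑ m ∈ s, (μ.real (Γ (q n) ∩ Γ (q m)) - p n * p m)
      ≤ 2 * ∑ n ∈ s, ∑ m ∈ s, (if q n ≤ q m then B n m else 0) :=
        sum_sum_le_two_mul_sum_sum_of_le s q
          (fun n m => by simp only [Set.inter_comm, mul_comm]) hB0
          fun n m hnm => h.measureReal_inter_sub_mul_le_ite hnm
    _ ≤ 2 * ∑ n ∈ s, ((if q n = 0 then ∑ m ∈ s, p m else 0) + K * Φ * p n) := by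
        gcongr with n
        exact hrow n
    _ = 2 * (#{n ∈ s | q n = 0} * ∑ m ∈ s, p m + K * Φ * ∑ n ∈ s, p n) := by
        rw [sum_add_distrib, ← sum_filter, sum_const, nsmul_eq_mul, ← mul_sum]
    _ ≤ 2 * (K * ∑ m ∈ s, p m + K * Φ * ∑ n ∈ s, p n) := by
        gcongr
        exact_mod_cast hK 0
    _ = 2 * K * (1 + Φ) * ∑ n ∈ s, p n := by ring

end IsPhiMixing

/-- strong Borel–Cantelli property along a subsequence `q(n)` under
summable φ-mixing. -/
theorem stmt5 {Ω : Type*} [MeasurableSpace Ω] (μ : Measure Ω) [IsProbabilityMeasure μ]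
    (Γ : ℕ → Set Ω) (hΓ : ∀ n, MeasurableSet (Γ n))
    (φ : ℕ → ℝ) (hφ : Summable φ)
    (hmix : ∀ (m k : ℕ) (A B : Set Ω),
      MeasurableSet[MeasurableSpace.generateFrom {S | ∃ j : ℕ, 1 ≤ j ∧ j ≤ m ∧ S = Γ j}] A →
      MeasurableSet[MeasurableSpace.generateFrom {S | ∃ j : ℕ, m + k ≤ j ∧ S = Γ j}] B →
      μ A ≠ 0 →
      |(μ (A ∩ B)).toReal / (μ A).toReal - (μ B).toReal| ≤ φ k)
    (q : ℕ → ℕ) (K : ℕ)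
    (hq : ∀ k : ℕ, {n : ℕ | q n = k}.Finite ∧ {n : ℕ | q n = k}.ncard ≤ K)
    (hdiv : Tendsto (fun N : ℕ => ∑ n ∈ Finset.Icc 1 N, (μ (Γ (q n))).toReal) atTop atTop) :
    ∀ᵐ ω ∂μ, Tendsto (fun N : ℕ =>
      (∑ n ∈ Finset.Icc 1 N, (Γ (q n)).indicator (fun _ => (1 : ℝ)) ω) /
      (∑ n ∈ Finset.Icc 1 N, (μ (Γ (q n))).toReal)) atTop (nhds 1) := by
  have hmixing : IsPhiMixing μ Γ φ := hmix
  exact ae_tendsto_sum_indicator_div_of_variance_le (fun n => hΓ (q n))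
    (fun N => hmixing.variance_sum_indicator_le hΓ hφ (card_filter_eq_le_of_ncard_le hq _)) hdiv
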